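/- arXiv:1910.13033 — 4 statements merged into one kernel-verified Lean document; each statement's English description precedes it below -/
import Mathlib

section
/- Weak-strong principle with a subspace determining boundedness (Theorem 6.1, e ⇒ a): Let E be a complex Banach space, Ω ⊆ ℂ^d open and f : ℂ^d → E a function. Suppose G is a linear subspace of the continuous dual E' which determines boundedness, i.e., every set S ⊆ E with sup_{x ∈ S} |e'(x)| < ∞ for all e' ∈ G is norm-bounded. If for every e' ∈ G the scalar function e' ∘ f : Ω → ℂ is holomorphic on Ω, then f is holomorphic on Ω. -/
/-!
Near `z ∈ Ω` every `e' ∘ f` is bounded on a fixed ball (compactness), so the Cauchy estimates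
bound its second-order Taylor remainder by `C(e') ‖h‖²` on a ball that does not depend on `e'`.
Because `G` determines boundedness, a family of weak bounds `e' ∘ a = O(w)` on a fixed set upgrades
to a norm bound `a = O(w)` there. Applied to differences of difference quotients, this makes them
Cauchy, which produces a candidate derivative `L` (linear since `G` separates points); applied to
`f (z + h) - f z - L h`, it gives the remainder estimate `O(‖h‖²)`.
-/

open Set Filter Topology Metric Asymptotics

section

variable {V E F : Type*} [NormedAddCommGroup V] [NormedSpace ℂ V]
  [NormedAddCommGroup E] [NormedSpace ℂ E] [NormedAddCommGroup F] [NormedSpace ℂ F] {M R : ℝ}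

def DeterminesBoundedness (G : Set (E →L[ℂ] ℂ)) : Prop :=
  ∀ S : Set E, (∀ e' ∈ G, BddAbove ((fun x => ‖e' x‖) '' S)) → Bornology.IsBounded S

theorem norm_sub_sub_smul_deriv_le [CompleteSpace F] {ψ : ℂ → F} {c x : ℂ}
    (hψ : DifferentiableOn ℂ ψ (ball c R)) (hM : ∀ w ∈ ball c R, ‖ψ w‖ ≤ M)
    (hx : x ∈ ball c R) :
    ‖ψ x - ψ c - (x - c) • deriv ψ c‖ ≤ 4 * M * ‖x - c‖ ^ 2 / R ^ 2 := by
  have hc : c ∈ ball c R := mem_ball_self (pos_of_mem_ball hx)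
  set g := dslope ψ c
  have hg : DifferentiableOn ℂ g (ball c R) :=
    (Complex.differentiableOn_dslope (isOpen_ball.mem_nhds hc)).2 hψ
  have hg_le : ∀ w ∈ ball c R, ‖g w‖ ≤ 2 * M / R := fun w hw =>
    Complex.norm_dslope_le_div_of_mapsTo_ball hψ (fun y hy => mem_closedBall_iff_norm.2 <|
      (norm_sub_le _ _).trans (by linarith [hM y hy, hM c hc])) hw
  have hdslope_le : ‖dslope g c x‖ ≤ 2 * (2 * M / R) / R :=
    Complex.norm_dslope_le_div_of_mapsTo_ball hg (fun y hy => mem_closedBall_iff_norm.2 <|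
      (norm_sub_le _ _).trans (by linarith [hg_le y hy, hg_le c hc])) hx
  have hψx : ψ x - ψ c - (x - c) • deriv ψ c = (x - c) ^ 2 • dslope g c x := by
    rw [pow_two, mul_smul, sub_smul_dslope, ← sub_smul_dslope ψ, ← dslope_same, smul_sub]
  rw [hψx, norm_smul, norm_pow]
  calc ‖x - c‖ ^ 2 * ‖dslope g c x‖ ≤ ‖x - c‖ ^ 2 * (2 * (2 * M / R) / R) := by gcongr
    _ = 4 * M * ‖x - c‖ ^ 2 / R ^ 2 := by ring

theorem norm_sub_sub_fderiv_le [CompleteSpace F] {φ : V → F} {z h : V}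
    (hφ : DifferentiableOn ℂ φ (ball z R)) (hM : ∀ w ∈ ball z R, ‖φ w‖ ≤ M) (hh : ‖h‖ < R) :
    ‖φ (z + h) - φ z - fderiv ℂ φ z h‖ ≤ 4 * M * ‖h‖ ^ 2 / R ^ 2 := by
  rcases eq_or_ne h 0 with rfl | h0
  · simp
  have hpos : 0 < ‖h‖ := norm_pos_iff.2 h0
  have hmaps : MapsTo (fun s : ℂ => z + s • h) (ball 0 (R / ‖h‖)) (ball z R) := fun s hs => by
    rw [mem_ball_zero_iff, lt_div_iff₀ hpos] at hs
    simpa [norm_smul] using hs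
  have hψ : DifferentiableOn ℂ (fun s : ℂ => φ (z + s • h)) (ball 0 (R / ‖h‖)) :=
    hφ.comp (by fun_prop) hmaps
  have hderiv : deriv (fun s : ℂ => φ (z + s • h)) 0 = fderiv ℂ φ z h := by
    have hline : HasDerivAt (fun s : ℂ => z + s • h) h 0 := by
      simpa using ((hasDerivAt_id (0 : ℂ)).smul_const h).const_add z
    have hφz : HasFDerivAt φ (fderiv ℂ φ z) (z + (0 : ℂ) • h) := by
      simpa using (hφ.differentiableAt (ball_mem_nhds z (hpos.trans hh))).hasFDerivAt
    exact (hφz.comp_hasDerivAt 0 hline).deriv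
  have h1 : (1 : ℂ) ∈ ball 0 (R / ‖h‖) := by
    rw [mem_ball_zero_iff, norm_one, one_lt_div hpos]
    exact hh
  have := norm_sub_sub_smul_deriv_le hψ (fun s hs => hM _ (hmaps hs)) h1
  simp only [one_smul, zero_smul, add_zero, sub_zero, norm_one, hderiv] at this
  convert this using 1
  field_simp

theorem isBigO_sub_sub_fderiv [CompleteSpace F] {φ : V → F} {z : V}
    (hφ : DifferentiableOn ℂ φ (ball z R)) (hM : ∀ w ∈ ball z R, ‖φ w‖ ≤ M) :
    (fun h => φ (z + h) - φ z - fderiv ℂ φ z h) =O[𝓟 (ball 0 R)] fun h => ‖h‖ ^ 2 := by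
  refine IsBigO.of_bound (4 * M / R ^ 2) (eventually_principal.2 fun h hh => ?_)
  rw [mem_ball_zero_iff] at hh
  calc _ ≤ 4 * M * ‖h‖ ^ 2 / R ^ 2 := norm_sub_sub_fderiv_le hφ hM hh
    _ = 4 * M / R ^ 2 * ‖‖h‖ ^ 2‖ := by rw [norm_pow, norm_norm]; ring

theorem isBigO_inv_smul_sub_sub_of_isBigO {φ : V → F} {ℓ : V →L[ℂ] F} {z u : V} {ρ : ℝ}
    (hφ : (fun h => φ (z + h) - φ z - ℓ h) =O[𝓟 (ball 0 ρ)] fun h => ‖h‖ ^ 2) :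
    (fun t : ℂ => t⁻¹ • (φ (z + t • u) - φ z) - ℓ u) =O[𝓟 ((· • u) ⁻¹' ball 0 ρ \ {0})]
      fun t => t := by
  obtain ⟨c, hc⟩ := Asymptotics.isBigO_principal.1 hφ
  refine Asymptotics.isBigO_principal.2 ⟨c * ‖u‖ ^ 2, fun t ⟨htu, ht0⟩ => ?_⟩
  have ht : t ≠ 0 := ht0
  have hrem : t⁻¹ • (φ (z + t • u) - φ z) - ℓ u =
      t⁻¹ • (φ (z + t • u) - φ z - ℓ (t • u)) := by
    rw [smul_sub _ _ (ℓ (t • u)), map_smul, inv_smul_smul₀ ht]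
  calc ‖t⁻¹ • (φ (z + t • u) - φ z) - ℓ u‖
      = ‖t‖⁻¹ * ‖φ (z + t • u) - φ z - ℓ (t • u)‖ := by rw [hrem, norm_smul, norm_inv]
    _ ≤ ‖t‖⁻¹ * (c * ‖‖t • u‖ ^ 2‖) := by gcongr; exact hc _ htu
    _ = c * ‖u‖ ^ 2 * ‖t‖ := by
      rw [norm_pow, norm_norm, norm_smul]
      field_simp [norm_ne_zero_iff.2 ht]

namespace DeterminesBoundedness

variable {G : Set (E →L[ℂ] ℂ)}

theorem eq_zero_of_forall_apply_eq_zero (hG : DeterminesBoundedness G) {x : E}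
    (hx : ∀ e' ∈ G, e' x = 0) : x = 0 := by
  have hline : Bornology.IsBounded (range fun n : ℕ => (n : ℂ) • x) :=
    hG _ fun e' he' => ⟨0, by rintro _ ⟨_, ⟨n, rfl⟩, rfl⟩; simp [hx e' he']⟩
  obtain ⟨K, hK⟩ := hline.exists_norm_le
  by_contra hx0
  obtain ⟨n, hn⟩ := exists_nat_gt (K / ‖x‖)
  have hnK : (n : ℝ) * ‖x‖ ≤ K := by simpa [norm_smul] using hK _ ⟨n, rfl⟩
  rw [div_lt_iff₀ (norm_pos_iff.2 hx0)] at hn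
  linarith

theorem eq_of_forall_apply_eq (hG : DeterminesBoundedness G) {x y : E}
    (h : ∀ e' ∈ G, e' x = e' y) : x = y :=
  sub_eq_zero.1 <| hG.eq_zero_of_forall_apply_eq_zero fun e' he' => by
    rw [map_sub, h e' he', sub_self]

theorem isBigO_principal_of_forall {ι W : Type*} [SeminormedAddCommGroup W]
    (hG : DeterminesBoundedness G) {a : ι → E} {w : ι → W} {s : Set ι}
    (ha : ∀ e' ∈ G, (fun i => e' (a i)) =O[𝓟 s] w) :
    a =O[𝓟 s] w := by
  have hS : ∀ e' ∈ G,
      BddAbove ((fun x => ‖e' x‖) '' ((fun i => (‖w i‖ : ℂ)⁻¹ • a i) '' s)) := by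
    intro e' he'
    obtain ⟨c, hc0, hc⟩ := (ha e' he').exists_nonneg
    refine ⟨c, ?_⟩
    rintro _ ⟨_, ⟨i, hi, rfl⟩, rfl⟩
    calc ‖e' ((‖w i‖ : ℂ)⁻¹ • a i)‖ = ‖w i‖⁻¹ * ‖e' (a i)‖ := by simp
      _ ≤ ‖w i‖⁻¹ * (c * ‖w i‖) := by gcongr; exact isBigOWith_principal.1 hc i hi
      _ ≤ c := by
        rw [mul_left_comm]
        exact mul_le_of_le_one_right hc0 (inv_mul_le_one_of_le₀ le_rfl (norm_nonneg _))
  obtain ⟨K, hK⟩ := (hG _ hS).exists_norm_le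
  refine Asymptotics.isBigO_principal.2 ⟨K, fun i hi => ?_⟩
  rcases eq_or_ne ‖w i‖ 0 with hw | hw
  · have : a i = 0 := hG.eq_zero_of_forall_apply_eq_zero fun e' he' => by
      obtain ⟨c, hc⟩ := Asymptotics.isBigO_principal.1 (ha e' he')
      simpa [hw] using hc i hi
    simp [this, hw]
  · have := hK _ ⟨i, hi, rfl⟩
    rw [norm_smul, norm_inv, Complex.norm_real, norm_norm,
      inv_mul_le_iff₀ (by positivity)] at this
    linarith

variable [CompleteSpace E] {f : V → E} {z : V} {ρ : ℝ} {ℓ : (E →L[ℂ] ℂ) → V →L[ℂ] ℂ}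

theorem exists_forall_apply_eq_of_isBigO (hG : DeterminesBoundedness G) (hρ : 0 < ρ)
    (hf : ∀ e' ∈ G, (fun h => e' (f (z + h)) - e' (f z) - ℓ e' h) =O[𝓟 (ball 0 ρ)]
      fun h => ‖h‖ ^ 2) (u : V) :
    ∃ D : E, ∀ e' ∈ G, e' D = ℓ e' u := by
  set q : ℂ → E := fun t => t⁻¹ • (f (z + t • u) - f z)
  set s : Set ℂ := (· • u) ⁻¹' ball 0 ρ \ {0}
  have hs : s ∈ 𝓝[≠] 0 := sdiff_mem_nhdsWithin_compl
    ((continuous_id.smul continuous_const).continuousAt.preimage_mem_nhds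
      (by simpa using ball_mem_nhds (0 : V) hρ)) _
  have hweak : ∀ e' ∈ G, (fun t => e' (q t) - ℓ e' u) =O[𝓟 s] fun t => t := fun e' he' =>
    (isBigO_inv_smul_sub_sub_of_isBigO (φ := fun w => e' (f w)) (hf e' he')).congr_left
      fun t => by simp only [q, map_smul, map_sub]
  have hpair : (fun p : ℂ × ℂ => q p.1 - q p.2) =O[𝓟 (s ×ˢ s)] fun p => p :=
    hG.isBigO_principal_of_forall fun e' he' => by
      have h₁ := (hweak e' he').comp_tendsto
        (tendsto_principal_principal.2 fun p (hp : p ∈ s ×ˢ s) => hp.1)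
      have h₂ := (hweak e' he').comp_tendsto
        (tendsto_principal_principal.2 fun p (hp : p ∈ s ×ˢ s) => hp.2)
      exact ((h₁.trans isBigO_fst_prod').sub (h₂.trans isBigO_snd_prod')).congr_left
        fun p => by simp
  have hcauchy : Tendsto (fun p : ℂ × ℂ => q p.1 - q p.2) (𝓝[≠] 0 ×ˢ 𝓝[≠] 0) (𝓝 0) :=
    (hpair.mono (le_principal_iff.2 (prod_mem_prod hs hs))).trans_tendsto <|
      tendsto_id.mono_left
        ((Filter.prod_mono nhdsWithin_le_nhds nhdsWithin_le_nhds).trans nhds_prod_eq.ge)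
  obtain ⟨D, hD⟩ := cauchy_map_iff_exists_tendsto.1 <|
    (IsUniformAddGroup.cauchy_map_iff_tendsto _ q).2 ⟨inferInstance, hcauchy⟩
  refine ⟨D, fun e' he' => tendsto_nhds_unique ((e'.continuous.tendsto D).comp hD) ?_⟩
  have hslope : Tendsto (fun t => e' (q t) - ℓ e' u) (𝓝[≠] 0) (𝓝 0) :=
    ((hweak e' he').mono (le_principal_iff.2 hs)).trans_tendsto
      (tendsto_id.mono_left nhdsWithin_le_nhds)
  simpa [Function.comp_def] using hslope.add_const (ℓ e' u)

theorem differentiableAt_of_isBigO (hG : DeterminesBoundedness G) (hρ : 0 < ρ)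
    (hf : ∀ e' ∈ G, (fun h => e' (f (z + h)) - e' (f z) - ℓ e' h) =O[𝓟 (ball 0 ρ)]
      fun h => ‖h‖ ^ 2) :
    DifferentiableAt ℂ f z := by
  choose D hD using hG.exists_forall_apply_eq_of_isBigO hρ hf
  let L₀ : V →ₗ[ℂ] E :=
    { toFun := D
      map_add' := fun u v => hG.eq_of_forall_apply_eq fun e' he' => by simp [hD _ e' he']
      map_smul' := fun c u => hG.eq_of_forall_apply_eq fun e' he' => by simp [hD _ e' he'] }
  have hL₀ : (L₀ : V → E) =O[𝓟 univ] fun u => u := hG.isBigO_principal_of_forall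
    fun e' he' => ((ℓ e').isBigO_id _).congr_left fun u => (hD u e' he').symm
  let L : V →L[ℂ] E := L₀.mkContinuousOfExistsBound <| by
    simpa using Asymptotics.isBigO_principal.1 hL₀
  have hrem : (fun h => f (z + h) - f z - L h) =O[𝓟 (ball 0 ρ)] fun h => ‖h‖ ^ 2 :=
    hG.isBigO_principal_of_forall fun e' he' => by simpa [L, L₀, hD _ e' he'] using hf e' he'
  refine (hasFDerivAt_iff_isLittleO_nhds_zero (f' := L)).2 ?_ |>.differentiableAt
  exact (hrem.mono (le_principal_iff.2 (ball_mem_nhds 0 hρ))).trans_isLittleO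
    (isLittleO_norm_pow_id one_lt_two)

end DeterminesBoundedness

end

/-- Weak-strong principle: if `G ⊆ E'` is a subspace of the dual determining
boundedness and `e' ∘ f` is holomorphic for every `e' ∈ G`, then `f` is holomorphic. -/
theorem holomorphic_of_weakly_holomorphic_determining
    {E : Type*} [NormedAddCommGroup E] [NormedSpace ℂ E] [CompleteSpace E]
    {d : ℕ} {Ω : Set (Fin d → ℂ)} (hΩ : IsOpen Ω)
    (G : Submodule ℂ (E →L[ℂ] ℂ))
    (hG : ∀ S : Set E, (∀ e' ∈ G, BddAbove ((fun x => ‖e' x‖) '' S)) →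
      Bornology.IsBounded S)
    {f : (Fin d → ℂ) → E}
    (hf : ∀ e' ∈ G, ∀ z ∈ Ω, DifferentiableAt ℂ (fun w => e' (f w)) z) :
    ∀ z ∈ Ω, DifferentiableAt ℂ f z := by
  have hG' : DeterminesBoundedness (G : Set (E →L[ℂ] ℂ)) := hG
  intro z hz
  obtain ⟨R, hR, hball⟩ := nhds_basis_closedBall.mem_iff.1 (hΩ.mem_nhds hz)
  refine hG'.differentiableAt_of_isBigO (ℓ := fun e' => fderiv ℂ (fun w => e' (f w)) z) hR
    fun e' he' => ?_
  obtain ⟨M, hM⟩ := (isCompact_closedBall z R).exists_bound_of_continuousOn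
    fun w hw => (hf e' he' w (hball hw)).continuousAt.continuousWithinAt
  exact isBigO_sub_sub_fderiv
    (fun w hw => (hf e' he' w (hball (ball_subset_closedBall hw))).differentiableWithinAt)
    (fun w hw => hM w (ball_subset_closedBall hw))
end

section
/- Local power series expansions imply holomorphy (Theorem 6.1, g ⇒ a): Let E be a complex Banach space, Ω ⊆ ℂ^d open and f : ℂ^d → E a function. Suppose that for every z ∈ Ω there are R ∈ (0,∞)^d with 𝔻_R(z) ⊆ Ω and a family (a_β)_{β ∈ ℕ^d} in E such that for every w ∈ 𝔻_R(z) the family ( a_β (w − z)^β )_{β ∈ ℕ^d} is summable in E with sum f(w). Then f is holomorphic on Ω. -/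
/-!
Grouping the multi-index series by total degree turns it into a formal multilinear series whose
`n`-th term is the homogeneous polynomial `y ↦ ∑_{|β| = n} y ^ β • a β`. Convergence at a point
all of whose coordinates have norm `t` bounds `‖a β‖ * t ^ |β|`, and since there are at most
`(n + 1) ^ d` multi-indices of degree `n`, the radius of convergence of that series is at least `t`.
So `f` has a power series expansion on a ball around every point of `Ω`, hence is analytic.
-/

open scoped NNReal ENNReal
open Filter Topology

theorem Finset.Nat.card_antidiagonalTuple_le (d n : ℕ) :
    (antidiagonalTuple d n).card ≤ (n + 1) ^ d := by
  have hsub : antidiagonalTuple d n ⊆ Fintype.piFinset fun _ : Fin d => range (n + 1) := by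
    intro β hβ
    refine Fintype.mem_piFinset.mpr fun k => mem_range.mpr (Nat.lt_succ_of_le ?_)
    exact mem_antidiagonalTuple.mp hβ ▸ single_le_sum (fun i _ => Nat.zero_le _) (mem_univ k)
  simpa using card_le_card hsub

theorem tendsto_add_one_pow_mul_pow_atTop_nhds_zero (d : ℕ) {q : ℝ} (hq₀ : 0 < q) (hq₁ : q < 1) :
    Tendsto (fun n : ℕ => ((n : ℝ) + 1) ^ d * q ^ n) atTop (𝓝 0) := by
  have h := ((tendsto_pow_const_mul_const_pow_of_abs_lt_one d (abs_lt.mpr ⟨by linarith, hq₁⟩)).comp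
    (tendsto_add_atTop_nat 1)).div_const q
  rw [zero_div] at h
  refine h.congr fun n => ?_
  simp only [Function.comp_apply, Nat.cast_add, Nat.cast_one, pow_succ]
  field_simp

section NontriviallyNormedField

variable {𝕜 : Type*} [NontriviallyNormedField 𝕜] {E : Type*} [NormedAddCommGroup E]
  [NormedSpace 𝕜 E] {d n : ℕ}

namespace ContinuousMultilinearMap

/-- Via `Fin n ≃ Σ k, Fin (β k)`, exactly `β k` of the `n` arguments are evaluated at
coordinate `k`, so on the diagonal this is `y ↦ ∏ k, y k ^ β k`. -/
noncomputable def monomial (β : Fin d → ℕ) (h : ∑ k, β k = n) :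
    ContinuousMultilinearMap 𝕜 (fun _ : Fin n => Fin d → 𝕜) 𝕜 :=
  (ContinuousMultilinearMap.mkPiAlgebra 𝕜 (Fin n) 𝕜).compContinuousLinearMap
    fun i => ContinuousLinearMap.proj (finSigmaFinEquiv.symm (Fin.cast h.symm i)).1

theorem monomial_apply_const (β : Fin d → ℕ) (h : ∑ k, β k = n) (y : Fin d → 𝕜) :
    monomial β h (fun _ => y) = ∏ k, y k ^ β k := by
  subst h
  simp only [monomial, compContinuousLinearMap_apply, mkPiAlgebra_apply,
    ContinuousLinearMap.proj_apply, Fin.cast_eq_self]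
  rw [finSigmaFinEquiv.symm.prod_comp (fun p => y p.1), Fintype.prod_sigma]
  simp

theorem norm_monomial_le (β : Fin d → ℕ) (h : ∑ k, β k = n) :
    ‖(monomial β h : ContinuousMultilinearMap 𝕜 (fun _ : Fin n => Fin d → 𝕜) 𝕜)‖ ≤ 1 := by
  refine opNorm_le_bound zero_le_one fun v => ?_
  simp only [monomial, compContinuousLinearMap_apply, mkPiAlgebra_apply,
    ContinuousLinearMap.proj_apply, norm_prod, one_mul]
  exact Finset.prod_le_prod (fun _ _ => norm_nonneg _) fun i _ => norm_le_pi_norm (v i) _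

end ContinuousMultilinearMap

namespace FormalMultilinearSeries

open Finset.Nat

noncomputable def ofMultiIndex (a : (Fin d → ℕ) → E) :
    FormalMultilinearSeries 𝕜 (Fin d → 𝕜) E :=
  fun n => ∑ β : antidiagonalTuple d n,
    (ContinuousMultilinearMap.monomial β.1 (mem_antidiagonalTuple.mp β.2)).smulRight (a β)

theorem ofMultiIndex_apply_const (a : (Fin d → ℕ) → E) (n : ℕ) (y : Fin d → 𝕜) :
    ofMultiIndex a n (fun _ => y) = ∑ β ∈ antidiagonalTuple d n, (∏ k, y k ^ β k) • a β := by
  simp only [ofMultiIndex, sum_apply, ContinuousMultilinearMap.smulRight_apply,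
    ContinuousMultilinearMap.monomial_apply_const]
  exact Finset.sum_coe_sort (antidiagonalTuple d n) fun β => (∏ k, y k ^ β k) • a β

theorem norm_ofMultiIndex_le (a : (Fin d → ℕ) → E) (n : ℕ) :
    ‖(ofMultiIndex a n : ContinuousMultilinearMap 𝕜 (fun _ : Fin n => Fin d → 𝕜) E)‖
      ≤ ∑ β ∈ antidiagonalTuple d n, ‖a β‖ := by
  rw [← Finset.sum_coe_sort]
  refine (norm_sum_le _ _).trans (Finset.sum_le_sum fun β _ => ?_)
  rw [ContinuousMultilinearMap.norm_smulRight]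
  exact mul_le_of_le_one_left (norm_nonneg _) (ContinuousMultilinearMap.norm_monomial_le _ _)

theorem hasSum_ofMultiIndex {a : (Fin d → ℕ) → E} {y : Fin d → 𝕜} {s : E}
    (h : HasSum (fun β => (∏ k, y k ^ β k) • a β) s) :
    HasSum (fun n => ofMultiIndex a n (fun _ => y)) s := by
  have hdegree := (Equiv.sigmaFiberEquiv fun β : Fin d → ℕ => ∑ k, β k).hasSum_iff.mpr h
  refine hdegree.sigma fun n => ?_
  rw [ofMultiIndex_apply_const]
  exact (Equiv.subtypeEquivRight fun β => mem_antidiagonalTuple.symm).hasSum_iff.mpr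
    ((antidiagonalTuple d n).hasSum _)

theorem le_radius_ofMultiIndex {a : (Fin d → ℕ) → E} {t : ℝ≥0} {C : ℝ}
    (hC : ∀ β, ‖a β‖ * (t : ℝ) ^ ∑ k, β k ≤ C) :
    (t : ℝ≥0∞) ≤ (ofMultiIndex a : FormalMultilinearSeries 𝕜 (Fin d → 𝕜) E).radius := by
  refine ENNReal.le_of_forall_pos_nnreal_lt fun r hr₀ hrt => ?_
  replace hrt : r < t := ENNReal.coe_lt_coe.mp hrt
  have ht₀ : (0 : ℝ) < t := hr₀.trans hrt
  set q : ℝ := r / t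
  have hC₀ : 0 ≤ C := (mul_nonneg (norm_nonneg _) (by positivity)).trans (hC 0)
  have hcoeff : ∀ n, ∀ β ∈ antidiagonalTuple d n, ‖a β‖ * (r : ℝ) ^ n ≤ C * q ^ n := by
    intro n β hβ
    calc ‖a β‖ * (r : ℝ) ^ n = ‖a β‖ * ((t : ℝ) ^ ∑ k, β k) * q ^ n := by
          rw [mem_antidiagonalTuple.mp hβ, mul_assoc, ← mul_pow, mul_div_cancel₀ _ ht₀.ne']
      _ ≤ C * q ^ n := by gcongr; exact hC β
  have hbound : ∀ n, ‖(ofMultiIndex a n : ContinuousMultilinearMap 𝕜 _ E)‖ * (r : ℝ) ^ n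
      ≤ C * (((n : ℝ) + 1) ^ d * q ^ n) := by
    intro n
    calc _ ≤ (∑ β ∈ antidiagonalTuple d n, ‖a β‖) * (r : ℝ) ^ n := by
          gcongr; exact norm_ofMultiIndex_le a n
      _ ≤ (antidiagonalTuple d n).card * (C * q ^ n) := by
          rw [Finset.sum_mul, ← nsmul_eq_mul]; exact Finset.sum_le_card_nsmul _ _ _ (hcoeff n)
      _ ≤ ((n : ℝ) + 1) ^ d * (C * q ^ n) := by
          gcongr; exact_mod_cast card_antidiagonalTuple_le d n
      _ = C * (((n : ℝ) + 1) ^ d * q ^ n) := by ring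
  have hlim := (tendsto_add_one_pow_mul_pow_atTop_nhds_zero d (div_pos hr₀ ht₀)
    ((div_lt_one ht₀).mpr hrt)).const_mul C
  rw [mul_zero] at hlim
  exact le_radius_of_tendsto _ (squeeze_zero (fun n => by positivity) hbound hlim)

theorem le_radius_ofMultiIndex_of_summable {a : (Fin d → ℕ) → E} {c : 𝕜}
    (h : Summable fun β => (∏ k, c ^ β k) • a β) :
    (‖c‖₊ : ℝ≥0∞) ≤ (ofMultiIndex a : FormalMultilinearSeries 𝕜 (Fin d → 𝕜) E).radius := by
  obtain ⟨C, hC⟩ := h.tendsto_cofinite_zero.norm.bddAbove_range_of_cofinite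
  refine le_radius_ofMultiIndex (C := C) fun β => ?_
  have hterm : ‖(∏ k, c ^ β k) • a β‖ = ‖a β‖ * ‖c‖ ^ ∑ k, β k := by
    simp only [norm_smul, norm_pow, mul_comm, Finset.prod_pow_eq_pow_sum]
  exact hterm ▸ hC (Set.mem_range_self β)

end FormalMultilinearSeries

end NontriviallyNormedField

theorem FormalMultilinearSeries.hasFPowerSeriesOnBall_ofMultiIndex {𝕜 : Type*}
    [DenselyNormedField 𝕜] {E : Type*} [NormedAddCommGroup E] [NormedSpace 𝕜 E] {d : ℕ}
    {f : (Fin d → 𝕜) → E} {z : Fin d → 𝕜} {a : (Fin d → ℕ) → E} {r : ℝ≥0∞} (hr : 0 < r)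
    (hf : ∀ y ∈ Metric.eball (0 : Fin d → 𝕜) r,
      HasSum (fun β => (∏ k, y k ^ β k) • a β) (f (z + y))) :
    HasFPowerSeriesOnBall f (ofMultiIndex a) z r where
  r_le := ENNReal.le_of_forall_pos_nnreal_lt fun s _ hsr => by
    obtain ⟨t, hst, htr⟩ := ENNReal.lt_iff_exists_nnreal_btwn.mp hsr
    obtain ⟨c, hsc, hct⟩ := NormedField.exists_lt_nnnorm_lt 𝕜 (ENNReal.coe_lt_coe.mp hst)
    have hc : (fun _ => c) ∈ Metric.eball (0 : Fin d → 𝕜) r := by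
      refine mem_eball_zero_iff.mpr (lt_of_le_of_lt ?_ ((ENNReal.coe_lt_coe.mpr hct).trans htr))
      exact ENNReal.coe_le_coe.mpr (pi_nnnorm_const_le c)
    calc (s : ℝ≥0∞) ≤ ‖c‖₊ := ENNReal.coe_le_coe.mpr hsc.le
      _ ≤ _ := le_radius_ofMultiIndex_of_summable (hf _ hc).summable
  r_pos := hr
  hasSum hy := hasSum_ofMultiIndex (hf _ hy)

theorem holomorphic_of_local_power_series_general
    {E : Type*} [NormedAddCommGroup E] [NormedSpace ℂ E]
    {d : ℕ} {Ω : Set (Fin d → ℂ)}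
    {f : (Fin d → ℂ) → E}
    (hf : ∀ z ∈ Ω, ∃ (R : Fin d → ℝ) (a : (Fin d → ℕ) → E),
      (∀ k, 0 < R k) ∧
      (Set.univ.pi fun k => Metric.ball (z k) (R k)) ⊆ Ω ∧
      ∀ w ∈ Set.univ.pi fun k => Metric.ball (z k) (R k),
        HasSum (fun β : Fin d → ℕ => (∏ k, (w k - z k) ^ β k) • a β) (f w)) :
    ∀ z ∈ Ω, DifferentiableAt ℂ f z := by
  intro z hz
  obtain ⟨R, a, hR, -, hsum⟩ := hf z hz
  have hpolydisc : Set.univ.pi (fun k => Metric.ball (z k) (R k)) ∈ 𝓝 z :=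
    set_pi_mem_nhds Set.finite_univ fun k _ => Metric.ball_mem_nhds _ (hR k)
  obtain ⟨ε, hε, hball⟩ := EMetric.mem_nhds_iff.mp hpolydisc
  have hps : HasFPowerSeriesOnBall f (FormalMultilinearSeries.ofMultiIndex a) z ε := by
    refine FormalMultilinearSeries.hasFPowerSeriesOnBall_ofMultiIndex hε fun y hy => ?_
    simpa using hsum (z + y) (hball (by simpa [Metric.mem_eball, edist_eq_enorm_sub] using hy))
  exact hps.analyticAt.differentiableAt

/-- Local power series expansions imply holomorphy. -/
theorem holomorphic_of_local_power_series
    {E : Type*} [NormedAddCommGroup E] [NormedSpace ℂ E] [CompleteSpace E]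
    {d : ℕ} {Ω : Set (Fin d → ℂ)} (hΩ : IsOpen Ω)
    {f : (Fin d → ℂ) → E}
    (hf : ∀ z ∈ Ω, ∃ (R : Fin d → ℝ) (a : (Fin d → ℕ) → E),
      (∀ k, 0 < R k) ∧
      (Set.univ.pi fun k => Metric.ball (z k) (R k)) ⊆ Ω ∧
      ∀ w ∈ Set.univ.pi fun k => Metric.ball (z k) (R k),
        HasSum (fun β : Fin d → ℕ => (∏ k, (w k - z k) ^ β k) • a β) (f w)) :
    ∀ z ∈ Ω, DifferentiableAt ℂ f z :=
  holomorphic_of_local_power_series_general hf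
end

section
/- Riemann's removable singularities theorem (Corollary after Theorem 7.4): Let E be a complex Banach space, Ω ⊆ ℂ^d open and connected, and A ⊆ Ω a set which is closed in Ω and thin, i.e., for every z ∈ A there are an open polydisc D with z ∈ D ⊆ Ω and a holomorphic function g : D → ℂ, not identically zero on D, with g = 0 on A ∩ D. Let f : Ω \ A → E be holomorphic on Ω \ A and suppose that for every z ∈ Ω there is an open polydisc D with z ∈ D ⊆ Ω such that f is norm-bounded on D \ A. Then there exists a holomorphic function F : Ω → E with F = f on Ω \ A. -/
/-!
Near a point `a ∈ A`, choose a complex direction `v` in which the function `g` cutting out `A`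
does not vanish identically. Its zeros on the complex line `a + ℂ v` are isolated, so some
circle `a + {|t| = r} v` avoids them, and by compactness the same circle works for all `x` near
`a`. On each such line `f` is bounded and holomorphic off finitely many points, which are therefore
removable, and Cauchy's formula gives `f x = (2πi)⁻¹ ∮_{|t| = r} f (x + t v) / t dt` for `x ∉ A`.
The right-hand side is holomorphic in `x` (differentiation under the integral sign, the derivative
of `f` being controlled by Cauchy estimates), so it is a holomorphic extension of `f` near `a`.
As `A` has empty interior, these local extensions agree with the limits of `f` off `A`, hence glue.
-/

open Metric Set Filter Topology Complex

def IsOpenPolydisc {d : ℕ} (D : Set (Fin d → ℂ)) : Prop :=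
  ∃ (w : Fin d → ℂ) (ρ : Fin d → ℝ), (∀ k, 0 < ρ k) ∧
    D = Set.univ.pi fun k => Metric.ball (w k) (ρ k)

section OneVariable

variable {E : Type*} [NormedAddCommGroup E] [NormedSpace ℂ E] [CompleteSpace E]

theorem exists_differentiableOn_eqOn_diff_singleton_of_norm_le {h : ℂ → E} {U : Set ℂ} {c : ℂ}
    {M : ℝ} (hU : IsOpen U) (hd : DifferentiableOn ℂ h (U \ {c})) (hM : ∀ z ∈ U \ {c}, ‖h z‖ ≤ M) :
    ∃ H : ℂ → E, DifferentiableOn ℂ H U ∧ EqOn H h (U \ {c}) ∧ ∀ z ∈ U, ‖H z‖ ≤ M := by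
  by_cases hc : c ∉ U
  · rw [sdiff_singleton_eq_self hc] at hd hM
    exact ⟨h, hd, eqOn_refl _ _, hM⟩
  rw [not_not] at hc
  set H := Function.update h c (limUnder (𝓝[≠] c) h)
  have hHh : EqOn H h (U \ {c}) := fun z hz => Function.update_of_ne hz.2 _ _
  have hHd : DifferentiableOn ℂ H U :=
    Complex.differentiableOn_update_limUnder_of_bddAbove (hU.mem_nhds hc) hd
      ⟨M, by rintro - ⟨z, hz, rfl⟩; exact hM z hz⟩
  refine ⟨H, hHd, hHh, fun z hz => ?_⟩
  rcases eq_or_ne z c with rfl | hzc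
  · have hlim : Tendsto (fun w => ‖H w‖) (𝓝[≠] z) (𝓝 ‖H z‖) :=
      (hHd.continuousOn.continuousAt (hU.mem_nhds hz)).norm.tendsto.mono_left nhdsWithin_le_nhds
    refine le_of_tendsto hlim ?_
    filter_upwards [inter_mem_nhdsWithin _ (hU.mem_nhds hz)] with w hw
    rw [hHh ⟨hw.2, hw.1⟩]
    exact hM w ⟨hw.2, hw.1⟩
  · rw [hHh ⟨hz, hzc⟩]
    exact hM z ⟨hz, hzc⟩

theorem exists_differentiableOn_eqOn_diff_of_finite_of_norm_le {h : ℂ → E} {U S : Set ℂ}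
    {M : ℝ} (hU : IsOpen U) (hS : S.Finite) (hd : DifferentiableOn ℂ h (U \ S))
    (hM : ∀ z ∈ U \ S, ‖h z‖ ≤ M) :
    ∃ H : ℂ → E, DifferentiableOn ℂ H U ∧ EqOn H h (U \ S) ∧ ∀ z ∈ U, ‖H z‖ ≤ M := by
  induction S, hS using Set.Finite.induction_on generalizing U with
  | empty =>
    rw [sdiff_empty] at hd hM
    exact ⟨h, hd, eqOn_refl _ _, hM⟩
  | @insert c S _ _ ih =>
    rw [← singleton_union, ← sdiff_sdiff] at hd hM ⊢
    obtain ⟨H', hH'd, hH'h, hH'M⟩ := ih (hU.sdiff isClosed_singleton) hd hM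
    obtain ⟨H, hHd, hHH', hHM⟩ :=
      exists_differentiableOn_eqOn_diff_singleton_of_norm_le hU hH'd hH'M
    exact ⟨H, hHd, fun z hz => (hHH' hz.1).trans (hH'h hz), hHM⟩

theorem circleIntegral_sub_inv_smul_of_differentiable_off_finite {h : ℂ → E} {U S : Set ℂ}
    {M : ℝ} (hU : IsOpen U) (hS : S.Finite) (hd : DifferentiableOn ℂ h (U \ S))
    (hM : ∀ z ∈ U \ S, ‖h z‖ ≤ M)
    {c w : ℂ} {R : ℝ} (hR : closedBall c R ⊆ U) (hSR : Disjoint S (sphere c R))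
    (hw : w ∈ ball c R) (hwS : w ∉ S) :
    ∮ z in C(c, R), (z - w)⁻¹ • h z = (2 * Real.pi * I : ℂ) • h w := by
  obtain ⟨H, hHd, hHh, -⟩ := exists_differentiableOn_eqOn_diff_of_finite_of_norm_le hU hS hd hM
  rw [← hHh ⟨hR (ball_subset_closedBall hw), hwS⟩,
    ← (hHd.diffContOnCl_ball hR).circleIntegral_sub_inv_smul hw]
  refine circleIntegral.integral_congr (pos_of_mem_ball hw).le fun z hz => ?_
  rw [hHh ⟨hR (sphere_subset_closedBall hz), fun hzS => disjoint_left.1 hSR hzS hz⟩]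

theorem DifferentiableOn.finite_inter_setOf_eq_zero {q : ℂ → E} {U K : Set ℂ}
    (hq : DifferentiableOn ℂ q U) (hU : IsOpen U) (hUc : IsPreconnected U) (hK : IsCompact K)
    (hKU : K ⊆ U) {t₀ : ℂ} (ht₀ : t₀ ∈ U) (hq₀ : q t₀ ≠ 0) : (K ∩ {t | q t = 0}).Finite := by
  rcases (hq.analyticOnNhd hU).eqOn_zero_or_eventually_ne_zero_of_preconnected hUc with h | h
  · exact absurd (h ht₀) hq₀
  simpa [sdiff_eq, compl_ofPred] using
    hK.finite_sdiff_of_mem_codiscreteWithin (codiscreteWithin_mono hKU h)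

theorem DifferentiableOn.exists_radius_forall_mem_sphere_ne_zero {q : ℂ → E} {c : ℂ} {R T : ℝ}
    (hq : DifferentiableOn ℂ q (ball c T)) (hR : 0 < R) (hRT : R < T) {t₀ : ℂ}
    (ht₀ : t₀ ∈ ball c T) (hq₀ : q t₀ ≠ 0) : ∃ r ∈ Ioo 0 R, ∀ t ∈ sphere c r, q t ≠ 0 := by
  have hZ := hq.finite_inter_setOf_eq_zero isOpen_ball (convex_ball _ _).isPreconnected
    (isCompact_closedBall c R) (closedBall_subset_ball hRT) ht₀ hq₀
  obtain ⟨r, hr, hrZ⟩ := ((Ioo_infinite hR).sdiff (hZ.image (‖· - c‖))).nonempty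
  refine ⟨r, hr, fun t ht hqt => hrZ ⟨t, ⟨?_, hqt⟩, mem_sphere_iff_norm.1 ht⟩⟩
  exact sphere_subset_closedBall.trans (closedBall_subset_closedBall hr.2.le) ht

theorem circleIntegral_sub_inv_smul_of_differentiable_off_zeros {h : ℂ → E} {q : ℂ → ℂ}
    {B : Set ℂ} {c w : ℂ} {r T M : ℝ} (hq : DifferentiableOn ℂ q (ball c T))
    (hqB : ∀ z ∈ ball c T ∩ B, q z = 0) (hqr : ∀ z ∈ sphere c r, q z ≠ 0)
    (hh : ∀ z ∈ ball c T \ B, DifferentiableAt ℂ h z) (hM : ∀ z ∈ ball c T \ B, ‖h z‖ ≤ M)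
    (hrT : r < T) (hw : w ∈ ball c r) (hwB : w ∉ B) :
    ∮ z in C(c, r), (z - w)⁻¹ • h z = (2 * Real.pi * I : ℂ) • h w := by
  obtain ⟨R, hrR, hRT⟩ := exists_between hrT
  have hcr : c + r ∈ sphere c r := by simp [(pos_of_mem_ball hw).le]
  set S := closedBall c R ∩ B
  have hS : S.Finite := (hq.finite_inter_setOf_eq_zero isOpen_ball
    (convex_ball c T).isPreconnected (isCompact_closedBall c R) (closedBall_subset_ball hRT)
    (sphere_subset_ball hrT hcr) (hqr _ hcr)).subset
      fun z hz => ⟨hz.1, hqB z ⟨closedBall_subset_ball hRT hz.1, hz.2⟩⟩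
  have hoff : ∀ z ∈ ball c R \ S, z ∈ ball c T \ B := fun z hz =>
    ⟨ball_subset_ball hRT.le hz.1, fun hB => hz.2 ⟨ball_subset_closedBall hz.1, hB⟩⟩
  exact circleIntegral_sub_inv_smul_of_differentiable_off_finite isOpen_ball hS
    (fun z hz => (hh z (hoff z hz)).differentiableWithinAt) (fun z hz => hM z (hoff z hz))
    (closedBall_subset_ball hrR)
    (disjoint_left.2 fun z hzS hz =>
      hqr z hz (hqB z ⟨closedBall_subset_ball hRT hzS.1, hzS.2⟩))
    hw fun hwS => hwB hwS.2

end OneVariable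

section SeveralVariables

variable {E : Type*} [NormedAddCommGroup E] [NormedSpace ℂ E]
variable {G : Type*} [NormedAddCommGroup G] [NormedSpace ℂ G]

theorem DifferentiableOn.eqOn_zero_of_convex_of_eventuallyEq_zero [CompleteSpace E] {g : G → E}
    {U : Set G} (hg : DifferentiableOn ℂ g U) (hU : IsOpen U) (hUc : Convex ℝ U) {c : G}
    (hc : c ∈ U) (h0 : g =ᶠ[𝓝 c] 0) : EqOn g 0 U := by
  intro y hy
  set ℓ : ℂ → G := fun t => c + t • (y - c)
  have hℓ : Continuous ℓ := by fun_prop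
  have hconv : Convex ℝ (ℓ ⁻¹' U) :=
    (hUc.translate_preimage_right c).linear_preimage
      ((LinearMap.toSpanSingleton ℂ G (y - c)).restrictScalars ℝ)
  have hq : AnalyticOnNhd ℂ (g ∘ ℓ) (ℓ ⁻¹' U) :=
    (hg.comp (by fun_prop) (mapsTo_preimage ℓ U)).analyticOnNhd (hU.preimage hℓ)
  have hq0 : g ∘ ℓ =ᶠ[𝓝 0] 0 :=
    (show Tendsto ℓ (𝓝 0) (𝓝 c) by simpa [ℓ] using hℓ.tendsto 0).eventually h0
  simpa [ℓ] using hq.eqOn_zero_of_preconnected_of_eventuallyEq_zero hconv.isPreconnected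
    (by simpa [ℓ] using hc) hq0 (show (1 : ℂ) ∈ ℓ ⁻¹' U by simpa [ℓ] using hy)

theorem norm_fderiv_le_of_forall_mem_ball_norm_le {f : G → E} {y : G} {ρ M : ℝ}
    (hf : DifferentiableOn ℂ f (ball y ρ)) (hρ : 0 < ρ) (hM : ∀ z ∈ ball y ρ, ‖f z‖ ≤ M) :
    ‖fderiv ℂ f y‖ ≤ 2 * M / ρ := by
  refine Complex.norm_fderiv_le_div_of_mapsTo_ball hf (fun z hz => ?_) hρ
  rw [mem_closedBall_iff_norm, two_mul]
  exact (norm_sub_le _ _).trans (add_le_add (hM z hz) (hM y (mem_ball_self hρ)))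

theorem continuousOn_fderiv_of_differentiableOn [ProperSpace G] {f : G → E} {U : Set G}
    (hf : DifferentiableOn ℂ f U) (hU : IsOpen U) : ContinuousOn (fderiv ℂ f) U := by
  intro y₀ hy₀
  obtain ⟨ρ, hρ, hball⟩ := Metric.isOpen_iff.1 hU y₀ hy₀
  have huc := (isCompact_closedBall y₀ (ρ / 2)).uniformContinuousOn_of_continuous
    (hf.continuousOn.mono ((closedBall_subset_ball (half_lt_self hρ)).trans hball))
  refine (Metric.continuousAt_iff.2 fun ε hε => ?_).continuousWithinAt
  obtain ⟨δ, hδ, hfδ⟩ := Metric.uniformContinuousOn_iff_le.1 huc (ε * ρ / 16) (by positivity)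
  refine ⟨min δ (ρ / 4), by positivity, fun {y} hy => ?_⟩
  have hyδ : dist y y₀ < δ := hy.trans_le (min_le_left _ _)
  have hyρ : dist y y₀ < ρ / 4 := hy.trans_le (min_le_right _ _)
  -- Cauchy estimates for `f - f (· + (y - y₀))`, which is uniformly small near `y₀`
  set φ : G → E := fun z => f z - f (z + (y - y₀))
  have hshift : ∀ z ∈ ball y₀ (ρ / 4), z ∈ closedBall y₀ (ρ / 2) ∧
      z + (y - y₀) ∈ closedBall y₀ (ρ / 2) := by
    intro z hz
    rw [mem_ball] at hz
    refine ⟨mem_closedBall.2 (by linarith), mem_closedBall.2 ?_⟩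
    calc dist (z + (y - y₀)) y₀ ≤ dist (z + (y - y₀)) z + dist z y₀ := dist_triangle _ _ _
      _ ≤ ρ / 2 := by rw [dist_self_add_left, ← dist_eq_norm]; linarith
  have hfd : ∀ z ∈ closedBall y₀ (ρ / 2), HasFDerivAt f (fderiv ℂ f z) z := fun z hz =>
    (hf.differentiableAt (hU.mem_nhds
      (hball (closedBall_subset_ball (half_lt_self hρ) hz)))).hasFDerivAt
  have hφd : ∀ z ∈ ball y₀ (ρ / 4),
      HasFDerivAt φ (fderiv ℂ f z - fderiv ℂ f (z + (y - y₀))) z := fun z hz =>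
    (hfd z (hshift z hz).1).sub
      ((hfd _ (hshift z hz).2).comp z ((hasFDerivAt_id z).add_const _))
  have hφM : ∀ z ∈ ball y₀ (ρ / 4), ‖φ z‖ ≤ ε * ρ / 16 := by
    intro z hz
    rw [← dist_eq_norm]
    refine hfδ _ (hshift z hz).1 _ (hshift z hz).2 ?_
    rw [dist_self_add_right, ← dist_eq_norm]
    exact hyδ.le
  have hφ' : fderiv ℂ φ y₀ = fderiv ℂ f y₀ - fderiv ℂ f y := by
    rw [(hφd y₀ (mem_ball_self (by positivity))).fderiv, add_sub_cancel]
  calc dist (fderiv ℂ f y) (fderiv ℂ f y₀) = ‖fderiv ℂ φ y₀‖ := by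
        rw [hφ', dist_eq_norm, norm_sub_rev]
    _ ≤ 2 * (ε * ρ / 16) / (ρ / 4) :=
        norm_fderiv_le_of_forall_mem_ball_norm_le
          (fun z hz => (hφd z hz).differentiableAt.differentiableWithinAt) (by positivity) hφM
    _ < ε := by field_simp; linarith

theorem differentiableAt_intervalIntegral_smul_comp_add [ProperSpace G] [CompleteSpace E]
    {f : G → E} {W : Set G} (hf : DifferentiableOn ℂ f W) (hW : IsOpen W) {φ : ℝ → ℂ}
    (hφ : Continuous φ) {γ : ℝ → G} (hγ : Continuous γ) {a b : ℝ} {x₀ : G}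
    (hx₀ : ∀ θ ∈ uIcc a b, x₀ + γ θ ∈ W) :
    DifferentiableAt ℂ (fun x => ∫ θ in a..b, φ θ • f (x + γ θ)) x₀ := by
  set T := (fun θ => x₀ + γ θ) '' uIcc a b
  have hT : IsCompact T := isCompact_uIcc.image (continuous_const.add hγ)
  obtain ⟨δ, hδ, hδW⟩ := hT.exists_cthickening_subset_open hW (image_subset_iff.2 hx₀)
  have hδ2 : 0 < δ / 2 := half_pos hδ
  have hfL : ∀ z ∈ cthickening δ T, DifferentiableAt ℂ f z := fun z hz =>
    hf.differentiableAt (hW.mem_nhds (hδW hz))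
  obtain ⟨M, hM⟩ := hT.cthickening.exists_bound_of_continuousOn (hf.continuousOn.mono hδW)
  obtain ⟨C, hC⟩ := (isCompact_uIcc (a := a) (b := b)).exists_bound_of_continuousOn
    hφ.continuousOn
  have hnear : ∀ x ∈ ball x₀ (δ / 2), ∀ θ ∈ uIcc a b, ball (x + γ θ) (δ / 2) ⊆ cthickening δ T := by
    intro x hx θ hθ z hz
    refine mem_cthickening_of_dist_le z _ δ _ (mem_image_of_mem _ hθ) ?_
    rw [mem_ball] at hx hz
    calc dist z (x₀ + γ θ) ≤ dist z (x + γ θ) + dist (x + γ θ) (x₀ + γ θ) := dist_triangle _ _ _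
      _ ≤ δ := by rw [dist_add_right]; linarith
  have hfx : ∀ x ∈ ball x₀ (δ / 2), ∀ θ ∈ uIcc a b, DifferentiableAt ℂ f (x + γ θ) :=
    fun x hx θ hθ => hfL _ (hnear x hx θ hθ (mem_ball_self hδ2))
  have hcont : ∀ x ∈ ball x₀ (δ / 2), ContinuousOn (fun θ => φ θ • f (x + γ θ)) (uIcc a b) :=
    fun x hx => hφ.continuousOn.smul fun θ hθ =>
      (ContinuousAt.comp (f := fun θ => x + γ θ) (hfx x hx θ hθ).continuousAt
        (by fun_prop)).continuousWithinAt
  have hcont' : ContinuousOn (fun θ => φ θ • fderiv ℂ f (x₀ + γ θ)) (uIcc a b) :=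
    hφ.continuousOn.smul ((continuousOn_fderiv_of_differentiableOn hf hW).comp
      (continuous_const.add hγ).continuousOn hx₀)
  have hbound : ∀ x ∈ ball x₀ (δ / 2), ∀ θ ∈ uIcc a b,
      ‖φ θ • fderiv ℂ f (x + γ θ)‖ ≤ C * (2 * M / (δ / 2)) := by
    intro x hx θ hθ
    rw [norm_smul]
    refine mul_le_mul (hC θ hθ) ?_ (norm_nonneg _) ((norm_nonneg _).trans (hC θ hθ))
    exact norm_fderiv_le_of_forall_mem_ball_norm_le
      (fun z hz => (hfL z (hnear x hx θ hθ hz)).differentiableWithinAt) hδ2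
      fun z hz => hM z (hnear x hx θ hθ hz)
  refine (intervalIntegral.hasFDerivAt_integral_of_dominated_of_fderiv_le
    (F' := fun x θ => φ θ • fderiv ℂ f (x + γ θ)) (ball_mem_nhds x₀ hδ2) ?_
    (hcont x₀ (mem_ball_self hδ2)).intervalIntegrable
    ((hcont'.mono uIoc_subset_uIcc).aestronglyMeasurable measurableSet_uIoc)
    (Eventually.of_forall fun θ hθ x hx => hbound x hx θ (uIoc_subset_uIcc hθ))
    intervalIntegrable_const
    (Eventually.of_forall fun θ hθ x hx => ?_)).differentiableAt
  · filter_upwards [ball_mem_nhds x₀ hδ2] with x hx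
    exact ((hcont x hx).mono uIoc_subset_uIcc).aestronglyMeasurable measurableSet_uIoc
  · exact ((hfx x hx θ (uIoc_subset_uIcc hθ)).hasFDerivAt.comp x
      ((hasFDerivAt_id x).add_const (γ θ))).const_smul (φ θ)

theorem differentiableAt_circleIntegral_smul_comp_add_smul [ProperSpace G] [CompleteSpace E]
    {f : G → E} {W : Set G} (hf : DifferentiableOn ℂ f W) (hW : IsOpen W) {k : ℂ → ℂ} {c : ℂ}
    {R : ℝ} (hR : 0 ≤ R) (hk : ContinuousOn k (sphere c R)) {v x₀ : G}
    (hx₀ : ∀ z ∈ sphere c R, x₀ + z • v ∈ W) :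
    DifferentiableAt ℂ (fun x => ∮ z in C(c, R), k z • f (x + z • v)) x₀ := by
  have hφ : Continuous fun θ => deriv (circleMap c R) θ * k (circleMap c R θ) := by
    simp only [deriv_circleMap]
    exact ((continuous_circleMap 0 R).mul continuous_const).mul
      (hk.comp_continuous (continuous_circleMap c R) (circleMap_mem_sphere c hR))
  simp only [circleIntegral, smul_smul]
  exact differentiableAt_intervalIntegral_smul_comp_add hf hW hφ
    ((continuous_circleMap c R).smul continuous_const)
    fun θ _ => hx₀ _ (circleMap_mem_sphere c hR θ)

def HasLocalHolomorphicExtension (f : G → E) (A : Set G) (z : G) : Prop :=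
  ∃ F : G → E, ∀ᶠ x in 𝓝 z, DifferentiableAt ℂ F x ∧ (x ∉ A → F x = f x)

theorem exists_differentiableAt_eq_of_hasLocalHolomorphicExtension {f : G → E} {A Ω : Set G}
    (hA : interior A = ∅) (hext : ∀ z ∈ Ω, HasLocalHolomorphicExtension f A z) :
    ∃ F : G → E, (∀ z ∈ Ω, DifferentiableAt ℂ F z) ∧ ∀ z ∈ Ω \ A, F z = f z := by
  have hdense : Dense Aᶜ := interior_eq_empty_iff_dense_compl.1 hA
  -- since `A` has empty interior, a local extension is determined by the limits of `f` off `A`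
  have hlim : ∀ {z : G} {F : G → E}, (∀ᶠ x in 𝓝 z, DifferentiableAt ℂ F x ∧ (x ∉ A → F x = f x)) →
      ∀ᶠ x in 𝓝 z, limUnder (𝓝[Aᶜ] x) f = F x := by
    intro z F hF
    filter_upwards [hF.eventually_nhds] with x hx
    have := mem_closure_iff_nhdsWithin_neBot.1 (hdense x)
    refine Tendsto.limUnder_eq ((hx.self_of_nhds.1.continuousAt.continuousWithinAt).congr' ?_)
    filter_upwards [nhdsWithin_le_nhds hx, self_mem_nhdsWithin] with y hy hyA using hy.2 hyA
  refine ⟨fun x => limUnder (𝓝[Aᶜ] x) f, fun z hz => ?_, fun z hz => ?_⟩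
  · obtain ⟨F, hF⟩ := hext z hz
    exact hF.self_of_nhds.1.congr_of_eventuallyEq (hlim hF)
  · obtain ⟨F, hF⟩ := hext z hz.1
    exact (hlim hF).self_of_nhds.trans (hF.self_of_nhds.2 hz.2)

theorem hasLocalHolomorphicExtension_of_ball [ProperSpace G] [CompleteSpace E] {f : G → E}
    {g : G → ℂ} {A : Set G} {a v : G} {R M : ℝ}
    (hf : ∀ z ∈ ball a R \ A, DifferentiableAt ℂ f z) (hfM : ∀ z ∈ ball a R \ A, ‖f z‖ ≤ M)
    (hg : DifferentiableOn ℂ g (ball a R)) (hgA : ∀ z ∈ ball a R ∩ A, g z = 0)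
    (hv : ‖v‖ < R / 3) (hgv : g (a + v) ≠ 0) : HasLocalHolomorphicExtension f A a := by
  have hR : 0 < R / 3 := (norm_nonneg v).trans_lt hv
  have hline : ∀ x ∈ ball a (R / 3), ∀ t ∈ ball (0 : ℂ) 2, x + t • v ∈ ball a R := by
    intro x hx t ht
    rw [mem_ball, dist_eq_norm] at hx ⊢
    rw [mem_ball_zero_iff] at ht
    calc ‖x + t • v - a‖ ≤ ‖x - a‖ + ‖t‖ * ‖v‖ := by
          rw [add_sub_right_comm, ← norm_smul]; exact norm_add_le _ _
      _ < R / 3 + 2 * (R / 3) := by gcongr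
      _ = R := by ring
  have hslice : ∀ x ∈ ball a (R / 3), DifferentiableOn ℂ (fun t : ℂ => g (x + t • v)) (ball 0 2) :=
    fun x hx => hg.comp (by fun_prop) fun t ht => hline x hx t ht
  obtain ⟨r, hr, hra⟩ := (hslice a (mem_ball_self hR)).exists_radius_forall_mem_sphere_ne_zero
    one_pos one_lt_two (t₀ := 1) (by simp) (by simpa using hgv)
  set W := ball a R ∩ g ⁻¹' {0}ᶜ
  have hW : IsOpen W := hg.continuousOn.isOpen_inter_preimage isOpen_ball isOpen_compl_singleton
  have hWA : ∀ y ∈ W, y ∉ A := fun y hy hyA => hy.2 (hgA y ⟨hy.1, hyA⟩)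
  have htube : ∀ᶠ x in 𝓝 a, ∀ t ∈ sphere (0 : ℂ) r, x + t • v ∈ W :=
    (isCompact_sphere 0 r).eventually_forall_of_forall_eventually fun t ht =>
      (by fun_prop : Continuous fun p : G × ℂ => p.1 + p.2 • v).continuousAt.preimage_mem_nhds
        (hW.mem_nhds ⟨hline a (mem_ball_self hR) t
          (sphere_subset_ball (hr.2.trans one_lt_two) ht), hra t ht⟩)
  refine ⟨fun x => (2 * Real.pi * I : ℂ)⁻¹ • ∮ t in C(0, r), (t - 0)⁻¹ • f (x + t • v), ?_⟩
  filter_upwards [htube, ball_mem_nhds a hR] with x hxW hx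
  refine ⟨(differentiableAt_circleIntegral_smul_comp_add_smul
    (fun y hy => (hf y ⟨hy.1, hWA y hy⟩).differentiableWithinAt) hW hr.1.le
    ((continuousOn_id.sub continuousOn_const).inv₀ fun t ht => by
      simpa [← norm_eq_zero, mem_sphere_zero_iff_norm.1 ht] using hr.1.ne') hxW).const_smul _,
    fun hxA => ?_⟩
  -- on the line through `x`, `A` lies in the zero set of `g`, which misses the circle
  rw [circleIntegral_sub_inv_smul_of_differentiable_off_zeros (h := fun t => f (x + t • v))
    (B := {t | x + t • v ∈ A})
    (hslice x hx) (fun t ht => hgA _ ⟨hline x hx t ht.1, ht.2⟩) (fun t ht => (hxW t ht).2)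
    (fun t ht => DifferentiableAt.comp (f := fun t : ℂ => x + t • v) t
      (hf _ ⟨hline x hx t ht.1, ht.2⟩) (by fun_prop))
    (fun t ht => hfM _ ⟨hline x hx t ht.1, ht.2⟩) (hr.2.trans one_lt_two) (mem_ball_self hr.1)
    (by simpa using hxA), inv_smul_smul₀ two_pi_I_ne_zero, zero_smul, add_zero]

theorem hasLocalHolomorphicExtension_of_eventually [ProperSpace G] [CompleteSpace E]
    {f : G → E} {g : G → ℂ} {A : Set G} {a : G} {M : ℝ}
    (hf : ∀ᶠ z in 𝓝 a, z ∉ A → DifferentiableAt ℂ f z) (hfM : ∀ᶠ z in 𝓝 a, z ∉ A → ‖f z‖ ≤ M)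
    (hg : ∀ᶠ z in 𝓝 a, DifferentiableAt ℂ g z) (hgA : ∀ᶠ z in 𝓝 a, z ∈ A → g z = 0)
    (hg0 : ¬ g =ᶠ[𝓝 a] 0) : HasLocalHolomorphicExtension f A a := by
  obtain ⟨R, hR, hball⟩ := Metric.eventually_nhds_iff_ball.1 (hf.and (hfM.and (hg.and hgA)))
  obtain ⟨b, hb, hgb⟩ : ∃ b ∈ ball a (R / 3), g b ≠ 0 := by
    by_contra! h
    exact hg0 (eventually_of_mem (ball_mem_nhds a (by positivity)) h)
  refine hasLocalHolomorphicExtension_of_ball (v := b - a) (fun z hz => (hball z hz.1).1 hz.2)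
    (fun z hz => (hball z hz.1).2.1 hz.2)
    (fun z hz => (hball z hz).2.2.1.differentiableWithinAt)
    (fun z hz => (hball z hz.1).2.2.2 hz.2) (by rwa [← dist_eq_norm]) (by rwa [add_sub_cancel])

theorem interior_eq_empty_of_forall_not_eventuallyEq_zero {X Y : Type*} [TopologicalSpace X]
    [Zero Y] {A : Set X}
    (h : ∀ z ∈ A, ∃ g : X → Y, ¬ g =ᶠ[𝓝 z] 0 ∧ ∀ᶠ x in 𝓝 z, x ∈ A → g x = 0) :
    interior A = ∅ := by
  refine eq_empty_iff_forall_notMem.2 fun z hz => ?_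
  obtain ⟨g, hg0, hgA⟩ := h z (interior_subset hz)
  exact hg0 (by filter_upwards [hgA, mem_interior_iff_mem_nhds.1 hz] with x h1 h2 using h1 h2)

end SeveralVariables

theorem IsOpenPolydisc.isOpen {d : ℕ} {D : Set (Fin d → ℂ)} (hD : IsOpenPolydisc D) :
    IsOpen D := by
  obtain ⟨w, ρ, -, rfl⟩ := hD
  exact isOpen_set_pi finite_univ fun k _ => isOpen_ball

theorem IsOpenPolydisc.convex {d : ℕ} {D : Set (Fin d → ℂ)} (hD : IsOpenPolydisc D) :
    Convex ℝ D := by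
  obtain ⟨w, ρ, -, rfl⟩ := hD
  exact convex_pi fun k _ => convex_ball _ _

theorem riemann_removable_singularities_general
    {E : Type*} [NormedAddCommGroup E] [NormedSpace ℂ E] [CompleteSpace E]
    {d : ℕ} {Ω : Set (Fin d → ℂ)} (hΩ : IsOpen Ω)
    {A : Set (Fin d → ℂ)} (hAclosed : Ω ∩ closure A ⊆ A)
    (hthin : ∀ z ∈ A, ∃ D : Set (Fin d → ℂ), IsOpenPolydisc D ∧ z ∈ D ∧ D ⊆ Ω ∧
      ∃ g : (Fin d → ℂ) → ℂ, (∀ x ∈ D, DifferentiableAt ℂ g x) ∧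
        ¬ (∀ x ∈ D, g x = 0) ∧ ∀ x ∈ A ∩ D, g x = 0)
    {f : (Fin d → ℂ) → E} (hf : ∀ z ∈ Ω \ A, DifferentiableAt ℂ f z)
    (hbdd : ∀ z ∈ Ω, ∃ D : Set (Fin d → ℂ), IsOpenPolydisc D ∧ z ∈ D ∧ D ⊆ Ω ∧
      Bornology.IsBounded (f '' (D \ A))) :
    ∃ F : (Fin d → ℂ) → E, (∀ z ∈ Ω, DifferentiableAt ℂ F z) ∧
      ∀ z ∈ Ω \ A, F z = f z := by
  have hgerm : ∀ z ∈ A, ∃ g : (Fin d → ℂ) → ℂ, (∀ᶠ x in 𝓝 z, DifferentiableAt ℂ g x) ∧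
      ¬ g =ᶠ[𝓝 z] 0 ∧ ∀ᶠ x in 𝓝 z, x ∈ A → g x = 0 := by
    intro z hz
    obtain ⟨D, hD, hzD, -, g, hgd, hg0, hgA⟩ := hthin z hz
    have hDz : D ∈ 𝓝 z := hD.isOpen.mem_nhds hzD
    refine ⟨g, eventually_of_mem hDz hgd, fun h => hg0 ?_,
      eventually_of_mem hDz fun x hx hxA => hgA x ⟨hxA, hx⟩⟩
    exact DifferentiableOn.eqOn_zero_of_convex_of_eventuallyEq_zero
      (fun x hx => (hgd x hx).differentiableWithinAt) hD.isOpen hD.convex hzD h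
  refine exists_differentiableAt_eq_of_hasLocalHolomorphicExtension
    (interior_eq_empty_of_forall_not_eventuallyEq_zero fun z hz =>
      (hgerm z hz).imp fun g hg => hg.2) fun z hz => ?_
  by_cases hzA : z ∈ A
  · obtain ⟨g, hgd, hg0, hgA⟩ := hgerm z hzA
    obtain ⟨D, hD, hzD, hDΩ, hfD⟩ := hbdd z hz
    obtain ⟨M, hM⟩ := isBounded_iff_forall_norm_le.1 hfD
    have hDz : D ∈ 𝓝 z := hD.isOpen.mem_nhds hzD
    exact hasLocalHolomorphicExtension_of_eventually
      (eventually_of_mem hDz fun x hx hxA => hf x ⟨hDΩ hx, hxA⟩)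
      (eventually_of_mem hDz fun x hx hxA => hM _ (mem_image_of_mem f ⟨hx, hxA⟩)) hgd hgA hg0
  · have hzA' : (closure A)ᶜ ∈ 𝓝 z :=
      isClosed_closure.isOpen_compl.mem_nhds fun h => hzA (hAclosed ⟨hz, h⟩)
    refine ⟨f, ?_⟩
    filter_upwards [hΩ.mem_nhds hz, hzA'] with x hxΩ hxA
    exact ⟨hf x ⟨hxΩ, fun h => hxA (subset_closure h)⟩, fun _ => rfl⟩

/-- Riemann's removable singularities theorem: a holomorphic function on the
complement of a thin, relatively closed subset `A` of a connected open set `Ω`,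
which is locally bounded near every point of `Ω`, extends holomorphically to `Ω`. -/
theorem riemann_removable_singularities
    {E : Type*} [NormedAddCommGroup E] [NormedSpace ℂ E] [CompleteSpace E]
    {d : ℕ} {Ω : Set (Fin d → ℂ)} (hΩ : IsOpen Ω) (hΩconn : IsConnected Ω)
    {A : Set (Fin d → ℂ)} (hAΩ : A ⊆ Ω) (hAclosed : Ω ∩ closure A ⊆ A)
    (hthin : ∀ z ∈ A, ∃ D : Set (Fin d → ℂ), IsOpenPolydisc D ∧ z ∈ D ∧ D ⊆ Ω ∧
      ∃ g : (Fin d → ℂ) → ℂ, (∀ x ∈ D, DifferentiableAt ℂ g x) ∧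
        ¬ (∀ x ∈ D, g x = 0) ∧ ∀ x ∈ A ∩ D, g x = 0)
    {f : (Fin d → ℂ) → E} (hf : ∀ z ∈ Ω \ A, DifferentiableAt ℂ f z)
    (hbdd : ∀ z ∈ Ω, ∃ D : Set (Fin d → ℂ), IsOpenPolydisc D ∧ z ∈ D ∧ D ⊆ Ω ∧
      Bornology.IsBounded (f '' (D \ A))) :
    ∃ F : (Fin d → ℂ) → E, (∀ z ∈ Ω, DifferentiableAt ℂ F z) ∧
      ∀ z ∈ Ω \ A, F z = f z :=
  riemann_removable_singularities_general hΩ hAclosed hthin hf hbdd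
end

section
/- Fubini's theorem for weakly C¹ functions (Theorem 4.4): Let E be a complex Banach space, Ω ⊆ ℝ² open and [a,b] × [c,d] ⊆ Ω. Let f : Ω → E be such that for every continuous linear functional e' ∈ E' the scalar function e' ∘ f is continuously differentiable on Ω. Then f is Bochner integrable on [a,b] × [c,d], for each x₂ ∈ [c,d] the function x₁ ↦ f(x₁,x₂) is Bochner integrable on [a,b] (and symmetrically in the other variable), and ∫_{[a,b]×[c,d]} f d(x₁,x₂) = ∫_c^d (∫_a^b f(x₁,x₂) dx₁) dx₂ = ∫_a^b (∫_c^d f(x₁,x₂) dx₂) dx₁. -/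
/-!
A weakly `C¹` function is weakly Lipschitz on every closed ball inside `Ω`, with a constant
depending on the functional. Applying the uniform boundedness principle to the difference
quotients `(f x - f y) / ‖x - y‖`, viewed in the bidual, makes the constant uniform, so `f` is
locally Lipschitz, hence continuous. A continuous function on a compact rectangle is Bochner
integrable, and Fubini's theorem applies.
-/

open MeasureTheory Set

section WeaklyLipschitz

variable {𝕜 E : Type*} [RCLike 𝕜] [NormedAddCommGroup E] [NormedSpace 𝕜 E]

theorem exists_lipschitzOnWith_of_forall_dual {X : Type*} [MetricSpace X] {f : X → E}
    {s : Set X} (hf : ∀ e' : E →L[𝕜] 𝕜, ∃ K, LipschitzOnWith K (fun x => e' (f x)) s) :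
    ∃ K, LipschitzOnWith K f s := by
  let J := NormedSpace.inclusionInDoubleDual 𝕜 E
  have norm_J : ∀ v, ‖J v‖ = ‖v‖ := (NormedSpace.inclusionInDoubleDualLi 𝕜).norm_map
  let g : {p : X × X // p.1 ∈ s ∧ p.2 ∈ s} → StrongDual 𝕜 (StrongDual 𝕜 E) :=
    fun p => J (((dist p.1.1 p.1.2)⁻¹ : 𝕜) • (f p.1.1 - f p.1.2))
  have norm_g : ∀ p, ‖g p‖ = (dist p.1.1 p.1.2)⁻¹ * dist (f p.1.1) (f p.1.2) := fun p => by
    rw [norm_J, norm_smul, norm_inv, RCLike.norm_ofReal, abs_dist, dist_eq_norm]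
  have norm_g_apply :
      ∀ p e', ‖g p e'‖ = (dist p.1.1 p.1.2)⁻¹ * dist (e' (f p.1.1)) (e' (f p.1.2)) :=
    fun p e' => by
      change ‖e' (((dist p.1.1 p.1.2)⁻¹ : 𝕜) • (f p.1.1 - f p.1.2))‖ = _
      rw [map_smul, map_sub, smul_eq_mul, norm_mul, norm_inv, RCLike.norm_ofReal, abs_dist,
        dist_eq_norm]
  obtain ⟨C, hC⟩ := banach_steinhaus (g := g) fun e' => by
    obtain ⟨K, hK⟩ := hf e'
    refine ⟨K, fun ⟨(x, y), hx, hy⟩ => ?_⟩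
    rw [norm_g_apply]
    calc (dist x y)⁻¹ * dist (e' (f x)) (e' (f y)) ≤ (dist x y)⁻¹ * (K * dist x y) := by
          gcongr; exact hK.dist_le_mul x hx y hy
      _ ≤ K := by
          rcases eq_or_ne (dist x y) 0 with h | h
          · simp [h]
          · rw [mul_comm, mul_assoc, mul_inv_cancel₀ h, mul_one]
  refine ⟨_, LipschitzOnWith.of_dist_le' (K := C) fun x hx y hy => ?_⟩
  rcases eq_or_ne x y with rfl | hxy
  · simp
  have := hC ⟨(x, y), hx, hy⟩
  rw [norm_g, inv_mul_le_iff₀ (dist_pos.2 hxy)] at this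
  linarith

variable {F : Type*} [NormedAddCommGroup F] [NormedSpace ℝ F] {f : F → E}

theorem Convex.exists_lipschitzOnWith_of_forall_dual_contDiffOn {s : Set F} (hs : Convex ℝ s)
    (hs' : IsCompact s) (hf : ∀ e' : E →L[𝕜] 𝕜, ContDiffOn ℝ 1 (fun x => e' (f x)) s) :
    ∃ K, LipschitzOnWith K f s :=
  exists_lipschitzOnWith_of_forall_dual fun e' =>
    (hf e').exists_lipschitzOnWith one_ne_zero hs hs'

theorem IsOpen.locallyLipschitzOn_of_forall_dual_contDiffOn [FiniteDimensional ℝ F] {Ω : Set F}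
    (hΩ : IsOpen Ω) (hf : ∀ e' : E →L[𝕜] 𝕜, ContDiffOn ℝ 1 (fun x => e' (f x)) Ω) :
    LocallyLipschitzOn Ω f := by
  intro x hx
  obtain ⟨r, hr, hrΩ⟩ := Metric.nhds_basis_closedBall.mem_iff.1 (hΩ.mem_nhds hx)
  obtain ⟨K, hK⟩ := (convex_closedBall x r).exists_lipschitzOnWith_of_forall_dual_contDiffOn
    (isCompact_closedBall x r) fun e' => (hf e').mono hrΩ
  exact ⟨K, _, mem_nhdsWithin_of_mem_nhds (Metric.closedBall_mem_nhds x hr), hK⟩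

end WeaklyLipschitz

theorem MeasureTheory.setIntegral_prod_symm {α β E : Type*} [MeasurableSpace α]
    [MeasurableSpace β] {μ : Measure α} {ν : Measure β} [SFinite μ] [SFinite ν]
    [NormedAddCommGroup E] [NormedSpace ℝ E] (f : α × β → E) {s : Set α} {t : Set β}
    (hf : IntegrableOn f (s ×ˢ t) (μ.prod ν)) :
    ∫ z in s ×ˢ t, f z ∂μ.prod ν = ∫ y in t, ∫ x in s, f (x, y) ∂μ ∂ν := by
  simp only [← Measure.prod_restrict s t, IntegrableOn] at hf ⊢
  exact integral_prod_symm f hf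

theorem fubini_weakly_C1_general
    {E : Type*} [NormedAddCommGroup E] [NormedSpace ℂ E]
    {Ω : Set (ℝ × ℝ)} (hΩ : IsOpen Ω) {a b c d : ℝ}
    (hrect : Set.Icc a b ×ˢ Set.Icc c d ⊆ Ω)
    {f : ℝ × ℝ → E}
    (hf : ∀ e' : E →L[ℂ] ℂ, ContDiffOn ℝ 1 (fun x => e' (f x)) Ω) :
    IntegrableOn f (Set.Icc a b ×ˢ Set.Icc c d) ∧
    (∀ x₂ ∈ Set.Icc c d, IntegrableOn (fun x₁ => f (x₁, x₂)) (Set.Icc a b)) ∧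
    (∀ x₁ ∈ Set.Icc a b, IntegrableOn (fun x₂ => f (x₁, x₂)) (Set.Icc c d)) ∧
    (∫ x in Set.Icc a b ×ˢ Set.Icc c d, f x) =
      (∫ x₂ in Set.Icc c d, ∫ x₁ in Set.Icc a b, f (x₁, x₂)) ∧
    (∫ x in Set.Icc a b ×ˢ Set.Icc c d, f x) =
      (∫ x₁ in Set.Icc a b, ∫ x₂ in Set.Icc c d, f (x₁, x₂)) := by
  have hcont : ContinuousOn f (Icc a b ×ˢ Icc c d) :=
    (hΩ.locallyLipschitzOn_of_forall_dual_contDiffOn hf).continuousOn.mono hrect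
  have hint : IntegrableOn f (Icc a b ×ˢ Icc c d) :=
    hcont.integrableOn_compact (isCompact_Icc.prod isCompact_Icc)
  refine ⟨hint, fun x₂ hx₂ => ?_, fun x₁ hx₁ => ?_, ?_, ?_⟩
  · exact (hcont.comp (by fun_prop) fun x₁ hx₁ => mk_mem_prod hx₁ hx₂).integrableOn_compact
      isCompact_Icc
  · exact (hcont.comp (by fun_prop) fun x₂ hx₂ => mk_mem_prod hx₁ hx₂).integrableOn_compact
      isCompact_Icc
  · rw [Measure.volume_eq_prod] at hint ⊢
    exact setIntegral_prod_symm f hint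
  · rw [Measure.volume_eq_prod] at hint ⊢
    exact setIntegral_prod f hint

/-- Fubini's theorem for weakly `C¹` functions on a rectangle. -/
theorem fubini_weakly_C1
    {E : Type*} [NormedAddCommGroup E] [NormedSpace ℂ E] [CompleteSpace E]
    {Ω : Set (ℝ × ℝ)} (hΩ : IsOpen Ω) {a b c d : ℝ}
    (hrect : Set.Icc a b ×ˢ Set.Icc c d ⊆ Ω)
    {f : ℝ × ℝ → E}
    (hf : ∀ e' : E →L[ℂ] ℂ, ContDiffOn ℝ 1 (fun x => e' (f x)) Ω) :
    IntegrableOn f (Set.Icc a b ×ˢ Set.Icc c d) ∧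
    (∀ x₂ ∈ Set.Icc c d, IntegrableOn (fun x₁ => f (x₁, x₂)) (Set.Icc a b)) ∧
    (∀ x₁ ∈ Set.Icc a b, IntegrableOn (fun x₂ => f (x₁, x₂)) (Set.Icc c d)) ∧
    (∫ x in Set.Icc a b ×ˢ Set.Icc c d, f x) =
      (∫ x₂ in Set.Icc c d, ∫ x₁ in Set.Icc a b, f (x₁, x₂)) ∧
    (∫ x in Set.Icc a b ×ˢ Set.Icc c d, f x) =
      (∫ x₁ in Set.Icc a b, ∫ x₂ in Set.Icc c d, f (x₁, x₂)) :=
  fubini_weakly_C1_general hΩ hrect hf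
end
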